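/- arXiv:1212.3801 — 5 statements merged into one kernel-verified Lean document; each statement's English description precedes it below -/
import Mathlib

section
/- With the wave-vector setup in the context, define U₀(t,x) = r^{−β} Σ_{i=1}^r |k_i|^α ( e^{−|k_i|^{2α} t} cos(k_i·x) v + e^{−|k_i'|^{2α} t} cos(k_i'·x) v' ), and define E₀(t,x) = −(r^{−2β}/2) Σ_{i=1}^r |k_i|^{2α} e^{−(|k_i|^{2α}+|k_i'|^{2α})t} sin(η·x) v', E₁(t,x) = −(r^{−2β}/2) Σ_{1≤i≠j≤r} |k_i|^α |k_j|^α e^{−(|k_i|^{2α}+|k_j'|^{2α})t} sin((k_j'−k_i)·x) v', and E₂(t,x) = −(r^{−2β}/2) Σ_{i=1}^r Σ_{j=1}^r |k_i|^α |k_j|^α e^{−(|k_i|^{2α}+|k_j'|^{2α})t} sin((k_j'+k_i)·x) v'. Then for all t ≥ 0 and all x ∈ ℝ³: (U₀(t,x)·∇_x) U₀(t,·)(x) = E₀(t,x) + E₁(t,x) + E₂(t,x). -/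
/-!
`U₀(t, ·)` is a superposition of cosine plane waves `cₙ cos(aₙ·y) wₙ`, and for such a field
`(u·∇)u = -∑ₙ ∑ₙ' cₙ cₙ' cos(aₙ·x) sin(aₙ'·x) (wₙ·aₙ') wₙ'`. The relations
`v·kⱼ = v'·kⱼ = v'·kⱼ' = 0`, `v·kⱼ' = 1` kill every pair of waves except `(kᵢ v, kⱼ' v')`, leaving
`-r^(-2β) ∑ᵢⱼ aᵢ bⱼ cos(kᵢ·x) sin(kⱼ'·x) v'` with the damped amplitudes
`aᵢ = |kᵢ|^α e^(-|kᵢ|^(2α) t)`, `bⱼ = |kⱼ|^α e^(-|kⱼ'|^(2α) t)`. The product-to-sum formula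
`2 cos A sin B = sin(B - A) + sin(B + A)` splits this into the sum-frequency part `E₂` and a
difference-frequency part, whose diagonal `i = j` is the resonant part `E₀` because `kᵢ' - kᵢ = η`.
-/

open Finset Real

noncomputable section

section PlaneWaves

variable {ι κ : Type*} [Fintype ι] [DecidableEq ι]

def convectiveDeriv (u w : (ι → ℝ) → ι → ℝ) (x : ι → ℝ) : ι → ℝ :=
  fun p => ∑ m, u x m * fderiv ℝ (fun y => w y p) x (Pi.single m 1)

def cosPlaneWaves (s : Finset κ) (c : κ → ℝ) (a w : κ → ι → ℝ) (y : ι → ℝ) : ι → ℝ :=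
  ∑ n ∈ s, (c n * cos (a n ⬝ᵥ y)) • w n

omit [DecidableEq ι] in
theorem hasFDerivAt_dotProduct (a x : ι → ℝ) :
    HasFDerivAt (fun y => a ⬝ᵥ y) (∑ m, a m • (ContinuousLinearMap.proj m : (ι → ℝ) →L[ℝ] ℝ)) x :=
  HasFDerivAt.fun_sum fun m _ => (hasFDerivAt_apply m x).const_mul (a m)

theorem fderiv_cosPlaneWaves_apply_single (s : Finset κ) (c : κ → ℝ) (a w : κ → ι → ℝ)
    (x : ι → ℝ) (p m : ι) :
    fderiv ℝ (fun y => cosPlaneWaves s c a w y p) x (Pi.single m 1) =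
      -∑ n ∈ s, c n * a n m * sin (a n ⬝ᵥ x) * w n p := by
  have hcoord : (fun y => cosPlaneWaves s c a w y p) =
      fun y => ∑ n ∈ s, c n * cos (a n ⬝ᵥ y) * w n p := by
    funext y
    simp [cosPlaneWaves, Finset.sum_apply]
  rw [hcoord, (HasFDerivAt.fun_sum fun n _ =>
    (((hasFDerivAt_dotProduct (a n) x).cos).const_mul (c n)).mul_const (w n p)).fderiv]
  simp only [_root_.sum_apply, smul_apply, ContinuousLinearMap.proj_apply,
    Pi.single_apply, smul_eq_mul, mul_ite, mul_one, mul_zero, sum_ite_eq', mem_univ, if_true,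
    neg_mul, mul_neg, sum_neg_distrib, neg_inj]
  exact sum_congr rfl fun n _ => by ring

theorem convectiveDeriv_cosPlaneWaves (s : Finset κ) (c : κ → ℝ) (a w : κ → ι → ℝ)
    (x : ι → ℝ) :
    convectiveDeriv (cosPlaneWaves s c a w) (cosPlaneWaves s c a w) x =
      -∑ n ∈ s, ∑ n' ∈ s,
        (c n * c n' * cos (a n ⬝ᵥ x) * sin (a n' ⬝ᵥ x) * (w n ⬝ᵥ a n')) • w n' := by
  funext p
  simp only [convectiveDeriv, fderiv_cosPlaneWaves_apply_single]
  simp only [cosPlaneWaves, dotProduct, Finset.sum_apply, Pi.smul_apply, smul_eq_mul, mul_neg,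
    mul_sum, sum_mul, sum_neg_distrib, Pi.neg_apply, neg_inj]
  conv_lhs => rw [sum_comm]; enter [2, n']; rw [sum_comm]
  rw [sum_comm]
  exact sum_congr rfl fun n _ => sum_congr rfl fun n' _ => sum_congr rfl fun m _ => by ring

theorem convectiveDeriv_sum_cos_smul_add_cos_smul (s : Finset κ) (c : ℝ) (a b : κ → ℝ)
    (k k' : κ → ι → ℝ) (v v' : ι → ℝ) (u : (ι → ℝ) → ι → ℝ)
    (hu : ∀ y, u y = c • ∑ i ∈ s, ((a i * cos (k i ⬝ᵥ y)) • v + (b i * cos (k' i ⬝ᵥ y)) • v'))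
    (hvk : ∀ j, v ⬝ᵥ k j = 0) (hvk' : ∀ j, v ⬝ᵥ k' j = 1)
    (hv'k : ∀ j, v' ⬝ᵥ k j = 0) (hv'k' : ∀ j, v' ⬝ᵥ k' j = 0) (x : ι → ℝ) :
    convectiveDeriv u u x =
      -(c ^ 2 * ∑ i ∈ s, ∑ j ∈ s, a i * b j * cos (k i ⬝ᵥ x) * sin (k' j ⬝ᵥ x)) • v' := by
  have hwaves : u = cosPlaneWaves (s.disjSum s) (Sum.elim (c * a ·) (c * b ·)) (Sum.elim k k')
      (Sum.elim (fun _ => v) (fun _ => v')) := by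
    funext y
    rw [hu, cosPlaneWaves, sum_disjSum, ← sum_add_distrib, smul_sum]
    refine sum_congr rfl fun i _ => ?_
    simp only [Sum.elim_inl, Sum.elim_inr, smul_add, smul_smul, mul_assoc]
  rw [hwaves, convectiveDeriv_cosPlaneWaves]
  simp only [sum_disjSum, Sum.elim_inl, Sum.elim_inr, hvk, hvk', hv'k, hv'k', mul_zero,
    mul_one, zero_smul, sum_const_zero, zero_add, add_zero, mul_sum]
  rw [neg_smul, sum_smul]
  congr 1
  refine sum_congr rfl fun i _ => ?_
  rw [sum_smul]
  exact sum_congr rfl fun j _ => congrArg (· • v') (by ring)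

end PlaneWaves

theorem two_mul_sum_sum_cos_mul_sin {κ : Type*} [DecidableEq κ] (s : Finset κ)
    (f g L M : κ → ℝ) :
    2 * ∑ i ∈ s, ∑ j ∈ s, f i * g j * cos (L i) * sin (M j) =
      ∑ i ∈ s, f i * g i * sin (M i - L i) +
        ∑ i ∈ s, ∑ j ∈ s, (if i ≠ j then f i * g j * sin (M j - L i) else 0) +
        ∑ i ∈ s, ∑ j ∈ s, f i * g j * sin (M j + L i) := by
  have hdiagonal : ∀ i ∈ s, ∑ j ∈ s, f i * g j * sin (M j - L i) =
      f i * g i * sin (M i - L i) +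
        ∑ j ∈ s, (if i ≠ j then f i * g j * sin (M j - L i) else 0) := by
    intro i hi
    rw [← sum_filter, filter_ne, add_sum_erase s (fun j => f i * g j * sin (M j - L i)) hi]
  rw [← sum_add_distrib, ← sum_congr rfl hdiagonal, ← sum_add_distrib, mul_sum]
  refine sum_congr rfl fun i _ => ?_
  rw [← sum_add_distrib, mul_sum]
  refine sum_congr rfl fun j _ => ?_
  rw [← mul_add, ← two_mul_sin_mul_cos]
  ring

end

theorem stmt_5_general (r : ℕ) (K α β : ℝ) (hK : 1 ≤ K)
    (kmag : ℕ → ℝ) (hkmag : ∀ i, kmag i = (2:ℝ) ^ (i - 1) * K)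
    (k k' : ℕ → Fin 3 → ℝ)
    (hk : ∀ i, k i = ![kmag i, 0, 0])
    (hk' : ∀ i, k' i = ![kmag i, 0, 1])
    (U₀ E₀ E₁ E₂ : ℝ → (Fin 3 → ℝ) → Fin 3 → ℝ)
    (hU₀ : ∀ t x, U₀ t x = ((r:ℝ) ^ (-β)) •
      ∑ i ∈ Finset.Icc 1 r,
        ((kmag i ^ α * Real.exp (-(kmag i ^ (2 * α)) * t) *
            Real.cos (∑ m, k i m * x m)) • (![0, 0, 1] : Fin 3 → ℝ) +
          (kmag i ^ α * Real.exp (-((kmag i ^ 2 + 1) ^ α) * t) *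
            Real.cos (∑ m, k' i m * x m)) • (![0, 1, 0] : Fin 3 → ℝ)))
    (hE₀ : ∀ t x, E₀ t x = (-((r:ℝ) ^ (-(2 * β)) / 2)) •
      ∑ i ∈ Finset.Icc 1 r,
        (kmag i ^ (2 * α) * Real.exp (-(kmag i ^ (2 * α) + (kmag i ^ 2 + 1) ^ α) * t) *
          Real.sin (x 2)) • (![0, 1, 0] : Fin 3 → ℝ))
    (hE₁ : ∀ t x, E₁ t x = (-((r:ℝ) ^ (-(2 * β)) / 2)) •
      ∑ i ∈ Finset.Icc 1 r, ∑ j ∈ Finset.Icc 1 r,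
        if i ≠ j then
          (kmag i ^ α * kmag j ^ α *
            Real.exp (-(kmag i ^ (2 * α) + (kmag j ^ 2 + 1) ^ α) * t) *
            Real.sin (∑ m, (k' j m - k i m) * x m)) • (![0, 1, 0] : Fin 3 → ℝ)
        else 0)
    (hE₂ : ∀ t x, E₂ t x = (-((r:ℝ) ^ (-(2 * β)) / 2)) •
      ∑ i ∈ Finset.Icc 1 r, ∑ j ∈ Finset.Icc 1 r,
        (kmag i ^ α * kmag j ^ α *
          Real.exp (-(kmag i ^ (2 * α) + (kmag j ^ 2 + 1) ^ α) * t) *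
          Real.sin (∑ m, (k' j m + k i m) * x m)) • (![0, 1, 0] : Fin 3 → ℝ)) :
    ∀ t : ℝ, 0 ≤ t → ∀ (x : Fin 3 → ℝ) (p : Fin 3),
      (∑ m, U₀ t x m * fderiv ℝ (fun y => U₀ t y p) x (Pi.single m 1)) =
        E₀ t x p + E₁ t x p + E₂ t x p := by
  intro t _ x p
  suffices convectiveDeriv (U₀ t) (U₀ t) x = E₀ t x + E₁ t x + E₂ t x from congrFun this p
  set a : ℕ → ℝ := fun i => kmag i ^ α * exp (-(kmag i ^ (2 * α)) * t)
  set b : ℕ → ℝ := fun i => kmag i ^ α * exp (-((kmag i ^ 2 + 1) ^ α) * t)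
  have hab : ∀ i j, a i * b j =
      kmag i ^ α * kmag j ^ α * exp (-(kmag i ^ (2 * α) + (kmag j ^ 2 + 1) ^ α) * t) := by
    intro i j
    rw [neg_add, add_mul, exp_add]
    ring
  have haa : ∀ i, a i * b i =
      kmag i ^ (2 * α) * exp (-(kmag i ^ (2 * α) + (kmag i ^ 2 + 1) ^ α) * t) := by
    intro i
    have hkmag_nonneg : 0 ≤ kmag i := by rw [hkmag]; positivity
    rw [hab, mul_comm 2 α, rpow_mul hkmag_nonneg, rpow_two, sq]
  have hres : ∀ i, k' i ⬝ᵥ x - k i ⬝ᵥ x = x 2 := by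
    simp [hk, hk', dotProduct, Fin.sum_univ_three]
  have hdiff : ∀ i j, k' j ⬝ᵥ x - k i ⬝ᵥ x = ∑ m, (k' j m - k i m) * x m :=
    fun i j => (sub_dotProduct _ _ _).symm
  have hsum : ∀ i j, k' j ⬝ᵥ x + k i ⬝ᵥ x = ∑ m, (k' j m + k i m) * x m :=
    fun i j => (add_dotProduct _ _ _).symm
  have key := two_mul_sum_sum_cos_mul_sin (Icc 1 r) a b (k · ⬝ᵥ x) (k' · ⬝ᵥ x)
  simp only [haa, hres] at key
  simp only [hab, hdiff, hsum] at key
  have hpolar : ∀ j, (![0, 0, 1] : Fin 3 → ℝ) ⬝ᵥ k j = 0 ∧ (![0, 0, 1] : Fin 3 → ℝ) ⬝ᵥ k' j = 1 ∧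
      (![0, 1, 0] : Fin 3 → ℝ) ⬝ᵥ k j = 0 ∧ (![0, 1, 0] : Fin 3 → ℝ) ⬝ᵥ k' j = 0 := by
    simp [hk, hk', dotProduct, Fin.sum_univ_three]
  rw [convectiveDeriv_sum_cos_smul_add_cos_smul (Icc 1 r) _ a b k k' _ _ (U₀ t) (hU₀ t)
    (fun j => (hpolar j).1) (fun j => (hpolar j).2.1) (fun j => (hpolar j).2.2.1)
    (fun j => (hpolar j).2.2.2), hE₀, hE₁, hE₂]
  simp only [← ite_zero_smul, ← sum_smul, smul_smul, ← add_smul]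
  congr 1
  rw [← rpow_mul_natCast r.cast_nonneg, show -β * ((2 : ℕ) : ℝ) = -(2 * β) by push_cast; ring]
  simp only [hab]
  linear_combination (-((r : ℝ) ^ (-(2 * β))) / 2) * key

/-- With the lacunary wave vectors `k_i = (2^(i-1)K, 0, 0)`, `k_i' = k_i + (0,0,1)`,
amplitudes `v = (0,0,1)`, `v' = (0,1,0)`, and the fractional heat evolution `U₀` of the
initial datum `u₀`, the quadratic interaction decomposes as
`(U₀·∇)U₀ = E₀ + E₁ + E₂` (resonant, difference-frequency and sum-frequency parts). -/
theorem stmt_5 (r : ℕ) (hr : 1 ≤ r) (K α β : ℝ) (hK : 1 ≤ K) (hα : 1 ≤ α) (hβ : 0 < β)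
    (kmag : ℕ → ℝ) (hkmag : ∀ i, kmag i = (2:ℝ) ^ (i - 1) * K)
    (k k' : ℕ → Fin 3 → ℝ)
    (hk : ∀ i, k i = ![kmag i, 0, 0])
    (hk' : ∀ i, k' i = ![kmag i, 0, 1])
    (U₀ E₀ E₁ E₂ : ℝ → (Fin 3 → ℝ) → Fin 3 → ℝ)
    (hU₀ : ∀ t x, U₀ t x = ((r:ℝ) ^ (-β)) •
      ∑ i ∈ Finset.Icc 1 r,
        ((kmag i ^ α * Real.exp (-(kmag i ^ (2 * α)) * t) *
            Real.cos (∑ m, k i m * x m)) • (![0, 0, 1] : Fin 3 → ℝ) +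
          (kmag i ^ α * Real.exp (-((kmag i ^ 2 + 1) ^ α) * t) *
            Real.cos (∑ m, k' i m * x m)) • (![0, 1, 0] : Fin 3 → ℝ)))
    (hE₀ : ∀ t x, E₀ t x = (-((r:ℝ) ^ (-(2 * β)) / 2)) •
      ∑ i ∈ Finset.Icc 1 r,
        (kmag i ^ (2 * α) * Real.exp (-(kmag i ^ (2 * α) + (kmag i ^ 2 + 1) ^ α) * t) *
          Real.sin (x 2)) • (![0, 1, 0] : Fin 3 → ℝ))
    (hE₁ : ∀ t x, E₁ t x = (-((r:ℝ) ^ (-(2 * β)) / 2)) •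
      ∑ i ∈ Finset.Icc 1 r, ∑ j ∈ Finset.Icc 1 r,
        if i ≠ j then
          (kmag i ^ α * kmag j ^ α *
            Real.exp (-(kmag i ^ (2 * α) + (kmag j ^ 2 + 1) ^ α) * t) *
            Real.sin (∑ m, (k' j m - k i m) * x m)) • (![0, 1, 0] : Fin 3 → ℝ)
        else 0)
    (hE₂ : ∀ t x, E₂ t x = (-((r:ℝ) ^ (-(2 * β)) / 2)) •
      ∑ i ∈ Finset.Icc 1 r, ∑ j ∈ Finset.Icc 1 r,
        (kmag i ^ α * kmag j ^ α *
          Real.exp (-(kmag i ^ (2 * α) + (kmag j ^ 2 + 1) ^ α) * t) *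
          Real.sin (∑ m, (k' j m + k i m) * x m)) • (![0, 1, 0] : Fin 3 → ℝ)) :
    ∀ t : ℝ, 0 ≤ t → ∀ (x : Fin 3 → ℝ) (p : Fin 3),
      (∑ m, U₀ t x m * fderiv ℝ (fun y => U₀ t y p) x (Pi.single m 1)) =
        E₀ t x p + E₁ t x p + E₂ t x p :=
  stmt_5_general r K α β hK kmag hkmag k k' hk hk' U₀ E₀ E₁ E₂ hU₀ hE₀ hE₁ hE₂
end

section
/- With the wave-vector setup in the context, define U₀(t,x) = r^{−β} Σ_{i=1}^r |k_i|^α ( e^{−|k_i|^{2α} t} cos(k_i·x) v + e^{−|k_i'|^{2α} t} cos(k_i'·x) v' ). Then there is a constant C depending only on α (independent of r, K, t, x, β) such that for all t > 0 and all x ∈ ℝ³: |U₀(t,x)| ≤ r^{−β} Σ_{i=1}^r |k_i|^α ( e^{−|k_i|^{2α} t} + e^{−|k_i'|^{2α} t} ) ≤ C · r^{−β} · t^{−1/2}. In particular sup_{t>0} t^{1/2} sup_{x} |U₀(t,x)| ≤ C r^{−β}, i.e. the homogeneous Besov norm ‖u₀‖_{Ḃ^{−α}_{∞,∞}} = sup_{t>0}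 t^{1/2} ‖e^{−t(−Δ)^α}u₀‖_{L^∞} of the initial datum u₀ = U₀(0,·) is at most C r^{−β}. -/
/-!
With `u = √t |k|^α`, a mode contributes `|k|^α e^{-|k|^{2α} t} = t^{-1/2} u e^{-u²}`, and
`u e^{-u²} ≤ min (u, u⁻¹)`. The frequencies `|k_i|^α = (2^{i-1} K)^α` grow at least by the factor
`2^α ≥ 2`, and for any such lacunary sequence `∑ min (u_i, u_i⁻¹) ≤ 4`, whatever `r` and `t`.
The modes `k_i'` decay faster than the `k_i`, so the total is at most `8 t^{-1/2}`; the pointwise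
bound on `|U₀|` is the triangle inequality with `|cos| ≤ 1` and unit vectors `v, v'`.
-/

open Finset Real

section Doubling

variable {a : ℕ → ℝ}

theorem pos_of_doubling (h0 : 0 < a 0) (ha : ∀ i, 2 * a i ≤ a (i + 1)) (i : ℕ) : 0 < a i := by
  induction i with
  | zero => exact h0
  | succ i ih => linarith [ha i]

theorem sum_range_succ_le_two_mul_of_doubling (h0 : 0 ≤ a 0) (ha : ∀ i, 2 * a i ≤ a (i + 1))
    (n : ℕ) : ∑ i ∈ range (n + 1), a i ≤ 2 * a n := by
  induction n with
  | zero => rw [sum_range_one]; linarith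
  | succ n ih => rw [sum_range_succ]; linarith [ha n]

theorem sum_range_inv_le_two_mul_inv_of_doubling (h0 : 0 < a 0)
    (ha : ∀ i, 2 * a i ≤ a (i + 1)) (n : ℕ) : ∑ i ∈ range n, (a i)⁻¹ ≤ 2 * (a 0)⁻¹ := by
  induction n generalizing a with
  | zero => simp [h0.le]
  | succ n ih =>
    have h1 : 0 < a 1 := by linarith [ha 0]
    have htail := ih h1 fun i => ha (i + 1)
    have hstep : 2 * (a 1)⁻¹ ≤ (a 0)⁻¹ := by
      rw [← div_eq_mul_inv, div_le_iff₀ h1, ← div_eq_inv_mul, le_div_iff₀ h0]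
      linarith [ha 0]
    rw [sum_range_succ']
    linarith

/-- Split at the first index with `1 < a i`: before it the terms grow at least geometrically,
after it their reciprocals decay geometrically, so each part contributes at most `2`. -/
theorem sum_range_min_inv_le_four_of_doubling (h0 : 0 < a 0) (ha : ∀ i, 2 * a i ≤ a (i + 1))
    (r : ℕ) : ∑ i ∈ range r, min (a i) (a i)⁻¹ ≤ 4 := by
  have hpos := pos_of_doubling h0 ha
  have hex : ∃ m, r ≤ m ∨ 1 < a m := ⟨r, .inl le_rfl⟩
  set m := Nat.find hex
  have hmr : m ≤ r := Nat.find_min' hex (.inl le_rfl)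
  have hsmall : ∀ i < m, a i ≤ 1 := fun i hi => by
    have := Nat.find_min hex hi; push Not at this; exact this.2
  have hbelow : ∑ i ∈ range m, min (a i) (a i)⁻¹ ≤ 2 := by
    obtain _ | m' := m
    · simp
    · calc ∑ i ∈ range (m' + 1), min (a i) (a i)⁻¹ ≤ ∑ i ∈ range (m' + 1), a i :=
            sum_le_sum fun i _ => min_le_left _ _
        _ ≤ 2 * a m' := sum_range_succ_le_two_mul_of_doubling h0.le ha m'
        _ ≤ 2 := by linarith [hsmall m' (by omega)]
  have habove : ∑ i ∈ Ico m r, min (a i) (a i)⁻¹ ≤ 2 := by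
    rcases hmr.eq_or_lt with hm | hm
    · simp [hm]
    have hlarge : 1 < a m := (Nat.find_spec hex).resolve_left (by omega)
    calc ∑ i ∈ Ico m r, min (a i) (a i)⁻¹ ≤ ∑ j ∈ range (r - m), (a (m + j))⁻¹ := by
          rw [sum_Ico_eq_sum_range]; exact sum_le_sum fun i _ => min_le_right _ _
      _ ≤ 2 * (a m)⁻¹ :=
          sum_range_inv_le_two_mul_inv_of_doubling (a := fun j => a (m + j)) (hpos m)
            (fun j => ha (m + j)) _
      _ ≤ 2 := by linarith [inv_lt_one_of_one_lt₀ hlarge]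
  rw [← sum_range_add_sum_Ico _ hmr]
  linarith

end Doubling

theorem mul_exp_neg_sq_le_min_inv {u : ℝ} (hu : 0 < u) : u * exp (-u ^ 2) ≤ min u u⁻¹ := by
  have hexp : exp (-u ^ 2) ≤ 1 := exp_le_one_iff.mpr (by nlinarith)
  refine le_min (by nlinarith) ?_
  have hgrowth : u ^ 2 + 1 ≤ exp (u ^ 2) := add_one_le_exp _
  have hcancel : exp (-u ^ 2) * exp (u ^ 2) = 1 := by rw [← exp_add]; simp
  rw [← one_div, le_div_iff₀ hu]
  nlinarith [exp_pos (-u ^ 2)]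

theorem sum_range_mul_exp_neg_sq_mul_le_of_doubling {a : ℕ → ℝ} (h0 : 0 < a 0)
    (ha : ∀ i, 2 * a i ≤ a (i + 1)) {t : ℝ} (ht : 0 < t) (r : ℕ) :
    ∑ i ∈ range r, a i * exp (-a i ^ 2 * t) ≤ 4 * (√t)⁻¹ := by
  have hst : 0 < √t := sqrt_pos.mpr ht
  have hrescale :
      ∀ i, a i * exp (-a i ^ 2 * t) = (√t)⁻¹ * (√t * a i * exp (-(√t * a i) ^ 2)) := by
    intro i
    rw [mul_pow, sq_sqrt ht.le]
    field_simp
  calc ∑ i ∈ range r, a i * exp (-a i ^ 2 * t)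
      = (√t)⁻¹ * ∑ i ∈ range r, √t * a i * exp (-(√t * a i) ^ 2) := by
        simp_rw [hrescale, mul_sum]
    _ ≤ (√t)⁻¹ * ∑ i ∈ range r, min (√t * a i) (√t * a i)⁻¹ := by
        gcongr with i
        exact mul_exp_neg_sq_le_min_inv (mul_pos hst (pos_of_doubling h0 ha i))
    _ ≤ (√t)⁻¹ * 4 := by
        gcongr
        refine sum_range_min_inv_le_four_of_doubling (a := fun i => √t * a i) (by positivity) ?_ r
        intro i
        nlinarith [ha i]
    _ = 4 * (√t)⁻¹ := mul_comm _ _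

theorem two_mul_rpow_le_rpow_of_two_mul_le {α x y : ℝ} (hα : 1 ≤ α) (hx : 0 ≤ x)
    (hxy : 2 * x ≤ y) : 2 * x ^ α ≤ y ^ α :=
  calc 2 * x ^ α ≤ 2 ^ α * x ^ α := by
        gcongr
        simpa using rpow_le_rpow_of_exponent_le one_le_two hα
    _ = (2 * x) ^ α := (mul_rpow zero_le_two hx).symm
    _ ≤ y ^ α := by gcongr

theorem sum_range_rpow_mul_heat_modes_le {α : ℝ} (hα : 1 ≤ α) {a : ℕ → ℝ} (h0 : 0 < a 0)
    (ha : ∀ i, 2 * a i ≤ a (i + 1)) {t : ℝ} (ht : 0 < t) (r : ℕ) :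
    ∑ i ∈ range r, a i ^ α * (exp (-(a i ^ (2 * α)) * t) + exp (-((a i ^ 2 + 1) ^ α) * t))
      ≤ 8 * t ^ (-(1 / 2 : ℝ)) := by
  have hpos := pos_of_doubling h0 ha
  have hsq : ∀ i, a i ^ (2 * α) = (a i ^ α) ^ 2 := fun i => by
    rw [← rpow_natCast, ← rpow_mul (hpos i).le, mul_comm]
    norm_num
  have hslower : ∀ i, exp (-((a i ^ 2 + 1) ^ α) * t) ≤ exp (-(a i ^ (2 * α)) * t) := fun i => by
    have : a i ^ (2 * α) ≤ (a i ^ 2 + 1) ^ α := by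
      rw [rpow_mul (hpos i).le, rpow_two]
      gcongr
      linarith
    gcongr
  calc ∑ i ∈ range r, a i ^ α * (exp (-(a i ^ (2 * α)) * t) + exp (-((a i ^ 2 + 1) ^ α) * t))
      ≤ ∑ i ∈ range r, 2 * (a i ^ α * exp (-(a i ^ α) ^ 2 * t)) := by
        refine sum_le_sum fun i _ => ?_
        rw [← hsq]
        nlinarith [hslower i, rpow_pos_of_pos (hpos i) α]
    _ = 2 * ∑ i ∈ range r, a i ^ α * exp (-(a i ^ α) ^ 2 * t) := (mul_sum _ _ _).symm
    _ ≤ 2 * (4 * (√t)⁻¹) := by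
        gcongr
        exact sum_range_mul_exp_neg_sq_mul_le_of_doubling (rpow_pos_of_pos h0 α)
          (fun i => two_mul_rpow_le_rpow_of_two_mul_le hα (hpos i).le (ha i)) ht r
    _ = 8 * t ^ (-(1 / 2 : ℝ)) := by rw [rpow_neg ht.le, sqrt_eq_rpow]; ring

theorem norm_smul_sum_smul_add_smul_le {ι E : Type*} [SeminormedAddCommGroup E] [NormedSpace ℝ E]
    {e e' : E} (he : ‖e‖ ≤ 1) (he' : ‖e'‖ ≤ 1) (c : ℝ) (s : Finset ι) (f g : ι → ℝ) :
    ‖c • ∑ i ∈ s, (f i • e + g i • e')‖ ≤ |c| * ∑ i ∈ s, (|f i| + |g i|) := by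
  rw [norm_smul, Real.norm_eq_abs]
  gcongr
  refine (norm_sum_le _ _).trans (sum_le_sum fun i _ => (norm_add_le _ _).trans ?_)
  rw [norm_smul, norm_smul, Real.norm_eq_abs, Real.norm_eq_abs]
  gcongr
  · exact mul_le_of_le_one_right (abs_nonneg _) he
  · exact mul_le_of_le_one_right (abs_nonneg _) he'

theorem abs_mul_cos_le (c y : ℝ) : |c * cos y| ≤ |c| := by
  rw [abs_mul]
  exact mul_le_of_le_one_right (abs_nonneg c) (abs_cos_le_one y)

theorem sqrt_sum_sq_eq_norm_toLp {n : Type*} [Fintype n] (v : n → ℝ) :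
    √(∑ p, v p ^ 2) = ‖WithLp.toLp 2 v‖ := by
  simp [EuclideanSpace.norm_eq]

/-- The fractional heat evolution `U₀(t,·) = e^{-t(-Δ)^α} u₀` of the initial datum satisfies,
with a constant `C = C(α)` independent of `r, K, t, x, β`:
`|U₀(t,x)| ≤ r^{-β} ∑_i |k_i|^α (e^{-|k_i|^{2α}t} + e^{-|k_i'|^{2α}t}) ≤ C r^{-β} t^{-1/2}`;
in particular `t^{1/2} |U₀(t,x)| ≤ C r^{-β}` for all `t > 0`, `x`, i.e.
`‖u₀‖_{Ḃ^{-α}_{∞,∞}} ≤ C r^{-β}`. -/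
theorem stmt_7 (α : ℝ) (hα : 1 ≤ α) :
    ∃ C : ℝ, 0 < C ∧
      ∀ r : ℕ, 1 ≤ r → ∀ K β : ℝ, 1 ≤ K → 0 < β →
      ∀ kmag : ℕ → ℝ, (∀ i, kmag i = (2:ℝ) ^ (i - 1) * K) →
      ∀ k k' : ℕ → Fin 3 → ℝ,
        (∀ i, k i = ![kmag i, 0, 0]) → (∀ i, k' i = ![kmag i, 0, 1]) →
      ∀ U₀ : ℝ → (Fin 3 → ℝ) → Fin 3 → ℝ,
        (∀ t x, U₀ t x = ((r:ℝ) ^ (-β)) •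
          ∑ i ∈ Finset.Icc 1 r,
            ((kmag i ^ α * Real.exp (-(kmag i ^ (2 * α)) * t) *
                Real.cos (∑ m, k i m * x m)) • (![0, 0, 1] : Fin 3 → ℝ) +
              (kmag i ^ α * Real.exp (-((kmag i ^ 2 + 1) ^ α) * t) *
                Real.cos (∑ m, k' i m * x m)) • (![0, 1, 0] : Fin 3 → ℝ))) →
      ∀ t : ℝ, 0 < t → ∀ x : Fin 3 → ℝ,
        Real.sqrt (∑ p, U₀ t x p ^ 2) ≤
            (r:ℝ) ^ (-β) * ∑ i ∈ Finset.Icc 1 r,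
              kmag i ^ α * (Real.exp (-(kmag i ^ (2 * α)) * t) +
                Real.exp (-((kmag i ^ 2 + 1) ^ α) * t)) ∧
        (r:ℝ) ^ (-β) * (∑ i ∈ Finset.Icc 1 r,
              kmag i ^ α * (Real.exp (-(kmag i ^ (2 * α)) * t) +
                Real.exp (-((kmag i ^ 2 + 1) ^ α) * t))) ≤
            C * (r:ℝ) ^ (-β) * t ^ (-(1 / 2 : ℝ)) ∧
        t ^ ((1:ℝ) / 2) * Real.sqrt (∑ p, U₀ t x p ^ 2) ≤ C * (r:ℝ) ^ (-β) := by
  refine ⟨8, by norm_num, fun r _ K β hK _ kmag hkmag _ _ _ _ U₀ hU t ht x => ?_⟩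
  set S := ∑ i ∈ Icc 1 r, kmag i ^ α *
    (exp (-(kmag i ^ (2 * α)) * t) + exp (-((kmag i ^ 2 + 1) ^ α) * t)) with hSdef
  have hrβ : 0 ≤ (r : ℝ) ^ (-β) := rpow_nonneg r.cast_nonneg _
  have hS : S ≤ 8 * t ^ (-(1 / 2 : ℝ)) := by
    rw [hSdef, ← Ico_add_one_right_eq_Icc, sum_Ico_eq_sum_range, Nat.add_sub_cancel]
    refine sum_range_rpow_mul_heat_modes_le hα (a := fun j => kmag (1 + j)) ?_ (fun j => ?_) ht r
    · simp only [hkmag, add_zero, Nat.sub_self, pow_zero, one_mul]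
      linarith
    · simp only [hkmag, show 1 + (j + 1) - 1 = j + 1 by omega, show 1 + j - 1 = j by omega,
        pow_succ]
      linarith
  have hnorm : √(∑ p, U₀ t x p ^ 2) ≤ (r : ℝ) ^ (-β) * S := by
    have hv : ‖WithLp.toLp 2 (![0, 0, 1] : Fin 3 → ℝ)‖ ≤ 1 := by
      simp [EuclideanSpace.norm_eq, Fin.sum_univ_three]
    have hv' : ‖WithLp.toLp 2 (![0, 1, 0] : Fin 3 → ℝ)‖ ≤ 1 := by
      simp [EuclideanSpace.norm_eq, Fin.sum_univ_three]
    rw [sqrt_sum_sq_eq_norm_toLp, hU, WithLp.toLp_smul, WithLp.toLp_sum]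
    simp only [WithLp.toLp_add, WithLp.toLp_smul]
    refine (norm_smul_sum_smul_add_smul_le hv hv' _ _ _ _).trans ?_
    rw [abs_of_nonneg hrβ, hSdef]
    gcongr with i
    have hk : 0 ≤ kmag i ^ α := rpow_nonneg (by rw [hkmag]; positivity) α
    rw [mul_add]
    gcongr <;> exact (abs_mul_cos_le _ _).trans_eq (abs_of_nonneg (by positivity))
  refine ⟨hnorm, by linarith [mul_le_mul_of_nonneg_left hS hrβ], ?_⟩
  have hcancel : t ^ ((1 : ℝ) / 2) * t ^ (-(1 / 2 : ℝ)) = 1 := by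
    rw [← rpow_add ht]; norm_num
  calc t ^ ((1 : ℝ) / 2) * √(∑ p, U₀ t x p ^ 2)
      ≤ t ^ ((1 : ℝ) / 2) * ((r : ℝ) ^ (-β) * (8 * t ^ (-(1 / 2 : ℝ)))) := by
        gcongr
        exact hnorm.trans (by gcongr)
    _ = 8 * (r : ℝ) ^ (-β) := by linear_combination 8 * (r : ℝ) ^ (-β) * hcancel
end

section
/- With the wave-vector setup in the context, define φ(t) = Σ_{i=1}^r |k_i|^{2α} ∫_0^t e^{−(|k_i|^{2α}+|k_i'|^{2α})τ} e^{−(t−τ)} dτ and u₁₀(t,x) = −(r^{−2β}/2) φ(t) sin(x₃) v'. Then there exist constants C ≥ c > 0 depending only on α (independent of r, K, t, β) such that: (i) sup_{x∈ℝ³} |u₁₀(t,x)| ≤ C r^{1−2β} for all t > 0; and (ii) sup_{x∈ℝ³} |u₁₀(t,x)| ≥ c r^{1−2β} for all t with K^{−2α} ≤ t ≤ 1. -/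
/-!
Each summand of `φ` has the closed form `a e^{-t} (1 - e^{-(b-1)t}) / (b-1)` with
`a = |k|^{2α}` and `b = |k|^{2α} + |k'|^{2α}`. Since `1 ≤ (|k|² + 1)^α ≤ 2^α |k|^{2α}`, the rate
`b - 1` is comparable to `a`: `a ≤ b - 1 ≤ (1 + 2^α) a`. Hence every mode contributes at most `1`
and, once `a t ≥ 1` and `t ≤ 1`, at least `e^{-1}(1 - e^{-1})/(1 + 2^α)`. Summing the `r` modes
gives `φ(t) ≍ r`, and `|u₁₀|` is `r^{-2β} φ(t) / 2` at `x₃ = π/2`.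
-/

open Real Finset

noncomputable def dampedConv (b t : ℝ) : ℝ :=
  ∫ τ in (0:ℝ)..t, exp (-b * τ) * exp (-(t - τ))

lemma dampedConv_nonneg (b : ℝ) {t : ℝ} (ht : 0 ≤ t) : 0 ≤ dampedConv b t :=
  intervalIntegral.integral_nonneg ht fun _ _ => by positivity

lemma dampedConv_eq {b : ℝ} (hb : b ≠ 1) (t : ℝ) :
    dampedConv b t = exp (-t) * (1 - exp (-((b - 1) * t))) / (b - 1) := by
  have hb' : 1 - b ≠ 0 := sub_ne_zero.mpr hb.symm
  have hsplit : ∀ τ : ℝ, exp (-b * τ) * exp (-(t - τ)) = exp (-t) * exp ((1 - b) * τ) := by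
    intro τ; rw [← exp_add, ← exp_add]; ring_nf
  simp only [dampedConv, hsplit, intervalIntegral.integral_const_mul,
    intervalIntegral.integral_comp_mul_left (fun x => exp x) hb', integral_exp, smul_eq_mul,
    mul_zero, exp_zero]
  rw [show (1 - b) * t = -((b - 1) * t) by ring, show 1 - b = -(b - 1) by ring]
  field_simp
  ring

lemma mul_dampedConv_le_one {a b t : ℝ} (ha : 0 < a) (hab : a ≤ b - 1) (ht : 0 ≤ t) :
    a * dampedConv b t ≤ 1 := by
  have hs : 0 < b - 1 := ha.trans_le hab
  rw [dampedConv_eq (by linarith)]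
  have hprofile : exp (-t) * (1 - exp (-((b - 1) * t))) ≤ 1 :=
    mul_le_one₀ (exp_le_one_iff.mpr (by linarith))
      (sub_nonneg.mpr (exp_le_one_iff.mpr (by nlinarith)))
      (by linarith [exp_pos (-((b - 1) * t))])
  calc a * (exp (-t) * (1 - exp (-((b - 1) * t))) / (b - 1))
      ≤ a * (1 / (b - 1)) := by gcongr
    _ ≤ 1 := by rw [mul_one_div, div_le_one hs]; exact hab

lemma le_mul_dampedConv {a b t D : ℝ} (ha : 0 < a) (hab : a ≤ b - 1) (hbD : b - 1 ≤ D * a)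
    (hat : 1 ≤ a * t) (ht : t ≤ 1) :
    exp (-1) * (1 - exp (-1)) / D ≤ a * dampedConv b t := by
  have hs : 0 < b - 1 := ha.trans_le hab
  have hD : 0 < D := pos_of_mul_pos_left (hs.trans_le hbD) ha.le
  have ht0 : 0 ≤ t := by nlinarith
  have hrate : 1 / D ≤ a / (b - 1) := by rw [div_le_div_iff₀ hD hs]; linarith
  have hdecay : exp (-1) ≤ exp (-t) := exp_le_exp.mpr (by linarith)
  have hsaturation : exp (-((b - 1) * t)) ≤ exp (-1) := exp_le_exp.mpr (by nlinarith)
  have hgap : exp (-1) ≤ 1 := exp_le_one_iff.mpr (by norm_num)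
  have hprofile : 0 ≤ exp (-t) * (1 - exp (-((b - 1) * t))) :=
    mul_nonneg (exp_pos _).le (by linarith)
  rw [dampedConv_eq (by linarith)]
  calc exp (-1) * (1 - exp (-1)) / D = exp (-1) * (1 - exp (-1)) * (1 / D) := by ring
    _ ≤ exp (-t) * (1 - exp (-((b - 1) * t))) * (a / (b - 1)) := by
        gcongr ?_ * (1 - ?_) * ?_
    _ = a * (exp (-t) * (1 - exp (-((b - 1) * t))) / (b - 1)) := by ring

lemma sq_add_one_rpow_le {k α : ℝ} (hk : 1 ≤ k) (hα : 0 ≤ α) :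
    (k ^ 2 + 1) ^ α ≤ 2 ^ α * k ^ (2 * α) := by
  calc (k ^ 2 + 1) ^ α ≤ (2 * k ^ 2) ^ α := by gcongr; nlinarith
    _ = 2 ^ α * k ^ (2 * α) := by
        rw [mul_rpow zero_le_two (by positivity), ← rpow_natCast_mul (by linarith)]
        norm_num

lemma one_le_rpow_mul_of_rpow_neg_le {K k α t : ℝ} (hK : 0 < K) (hKk : K ≤ k) (hα : 0 ≤ α)
    (ht : K ^ (-α) ≤ t) : 1 ≤ k ^ α * t := by
  calc (1 : ℝ) = K ^ α * K ^ (-α) := by rw [rpow_neg hK.le, mul_inv_cancel₀ (by positivity)]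
    _ ≤ k ^ α * t := by
        gcongr
        exact rpow_nonneg (hK.le.trans hKk) α

noncomputable def lowerConst (α : ℝ) : ℝ :=
  exp (-1) * (1 - exp (-1)) / (1 + 2 ^ α)

lemma lowerConst_pos (α : ℝ) : 0 < lowerConst α := by
  have hgap : exp (-1) < 1 := exp_lt_one_iff.mpr (by norm_num)
  have hpos := exp_pos (-1)
  unfold lowerConst
  exact div_pos (by nlinarith) (by positivity)

lemma lowerConst_le_one (α : ℝ) : lowerConst α ≤ 1 := by
  have hgap : exp (-1) < 1 := exp_lt_one_iff.mpr (by norm_num)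
  have hD : 1 ≤ 1 + (2 : ℝ) ^ α := by linarith [rpow_nonneg zero_le_two α]
  refine (div_le_one (by linarith)).mpr ?_
  nlinarith [exp_pos (-1)]

noncomputable def resonantMode (α k t : ℝ) : ℝ :=
  k ^ (2 * α) * dampedConv (k ^ (2 * α) + (k ^ 2 + 1) ^ α) t

section resonantMode

variable {α k t : ℝ}

lemma resonantMode_nonneg (hk : 0 ≤ k) (ht : 0 ≤ t) : 0 ≤ resonantMode α k t :=
  mul_nonneg (by positivity) (dampedConv_nonneg _ ht)

lemma resonantMode_le_one (hα : 0 ≤ α) (hk : 1 ≤ k) (ht : 0 ≤ t) : resonantMode α k t ≤ 1 :=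
  mul_dampedConv_le_one (by positivity)
    (by linarith [one_le_rpow (by nlinarith : (1 : ℝ) ≤ k ^ 2 + 1) hα]) ht

lemma lowerConst_le_resonantMode (hα : 0 ≤ α) (hk : 1 ≤ k) (hkt : 1 ≤ k ^ (2 * α) * t)
    (ht : t ≤ 1) : lowerConst α ≤ resonantMode α k t :=
  le_mul_dampedConv (by positivity)
    (by linarith [one_le_rpow (by nlinarith : (1 : ℝ) ≤ k ^ 2 + 1) hα])
    (by linarith [sq_add_one_rpow_le hk hα]) hkt ht

end resonantMode

section sums

variable {α t : ℝ} {ι : Type*} (s : Finset ι) {k : ι → ℝ}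

lemma sum_resonantMode_le_card (hα : 0 ≤ α) (hk : ∀ i ∈ s, 1 ≤ k i) (ht : 0 ≤ t) :
    ∑ i ∈ s, resonantMode α (k i) t ≤ #s := by
  simpa using sum_le_card_nsmul s _ 1 fun i hi => resonantMode_le_one hα (hk i hi) ht

lemma card_mul_lowerConst_le_sum_resonantMode {K : ℝ} (hα : 0 ≤ α) (hK : 1 ≤ K)
    (hk : ∀ i ∈ s, K ≤ k i) (htK : K ^ (-(2 * α)) ≤ t) (ht : t ≤ 1) :
    #s * lowerConst α ≤ ∑ i ∈ s, resonantMode α (k i) t := by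
  simpa using card_nsmul_le_sum s _ (lowerConst α) fun i hi =>
    lowerConst_le_resonantMode hα (hK.trans (hk i hi))
      (one_le_rpow_mul_of_rpow_neg_le (by linarith) (hk i hi) (by linarith) htK) ht

end sums

lemma sqrt_sum_sq_smul_e₂ (s : ℝ) :
    √(∑ p, ((s • ![0, 1, 0] : Fin 3 → ℝ) p) ^ 2) = |s| := by
  simp [Fin.sum_univ_three, sqrt_sq_eq_abs]

/-- The resonant part `u₁₀(t,x) = -(r^{-2β}/2) φ(t) sin(x₃) v'` of the second Picard iterate,
where `φ(t) = ∑_i |k_i|^{2α} ∫_0^t e^{-(|k_i|^{2α}+|k_i'|^{2α})τ} e^{-(t-τ)} dτ`, satisfies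
`sup_x |u₁₀(t,x)| ≤ C r^{1-2β}` for all `t > 0` and
`sup_x |u₁₀(t,x)| ≥ c r^{1-2β}` for `K^{-2α} ≤ t ≤ 1`, with `c, C` depending only on `α`. -/
theorem stmt_8 (α : ℝ) (hα : 1 ≤ α) :
    ∃ c C : ℝ, 0 < c ∧ c ≤ C ∧
      ∀ r : ℕ, 1 ≤ r → ∀ K β : ℝ, 1 ≤ K → 0 < β →
      ∀ kmag : ℕ → ℝ, (∀ i, kmag i = (2:ℝ) ^ (i - 1) * K) →
      ∀ φ : ℝ → ℝ,
        (∀ t, φ t = ∑ i ∈ Finset.Icc 1 r, kmag i ^ (2 * α) *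
          ∫ τ in (0:ℝ)..t,
            Real.exp (-(kmag i ^ (2 * α) + (kmag i ^ 2 + 1) ^ α) * τ) *
              Real.exp (-(t - τ))) →
      ∀ u₁₀ : ℝ → (Fin 3 → ℝ) → Fin 3 → ℝ,
        (∀ t x, u₁₀ t x =
          (-((r:ℝ) ^ (-(2 * β)) / 2) * φ t * Real.sin (x 2)) • (![0, 1, 0] : Fin 3 → ℝ)) →
        -- (i) upper bound for all t > 0
        (∀ t : ℝ, 0 < t → ∀ x : Fin 3 → ℝ,
          Real.sqrt (∑ p, u₁₀ t x p ^ 2) ≤ C * (r:ℝ) ^ (1 - 2 * β)) ∧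
        -- (ii) lower bound on the sup for K^{-2α} ≤ t ≤ 1
        (∀ t : ℝ, K ^ (-(2 * α)) ≤ t → t ≤ 1 →
          ∃ x : Fin 3 → ℝ,
            c * (r:ℝ) ^ (1 - 2 * β) ≤ Real.sqrt (∑ p, u₁₀ t x p ^ 2)) := by
  have hα₀ : 0 ≤ α := by linarith
  refine ⟨lowerConst α / 2, 1 / 2, by linarith [lowerConst_pos α],
    by linarith [lowerConst_le_one α], ?_⟩
  intro r hr K β hK _ kmag hkmag φ hφ u₁₀ hu
  have hr₀ : (0 : ℝ) < r := by exact_mod_cast hr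
  have hk : ∀ i, K ≤ kmag i := fun i => by
    rw [hkmag]; nlinarith [one_le_pow₀ (by norm_num : (1 : ℝ) ≤ 2) (n := i - 1)]
  have hφ' : ∀ t, φ t = ∑ i ∈ Icc 1 r, resonantMode α (kmag i) t := hφ
  have hnorm : ∀ t x,
      √(∑ p, u₁₀ t x p ^ 2) = (r : ℝ) ^ (1 - 2 * β) / 2 * (|φ t| / r) * |sin (x 2)| := by
    intro t x
    rw [hu t x, sqrt_sum_sq_smul_e₂, abs_mul, abs_mul, abs_neg, abs_div, abs_two,
      abs_of_pos (rpow_pos_of_pos hr₀ _), sub_eq_add_neg, rpow_add hr₀, rpow_one]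
    field_simp
  constructor
  · intro t ht x
    have hφ_nonneg : 0 ≤ φ t :=
      hφ' t ▸ sum_nonneg fun i _ => resonantMode_nonneg (by linarith [hk i]) ht.le
    have hratio : φ t / r ≤ 1 := by
      refine (div_le_one hr₀).mpr ?_
      simpa [hφ'] using
        sum_resonantMode_le_card (Icc 1 r) hα₀ (fun i _ => hK.trans (hk i)) ht.le
    calc _ = (r : ℝ) ^ (1 - 2 * β) / 2 * (φ t / r) * |sin (x 2)| := by
          rw [hnorm, abs_of_nonneg hφ_nonneg]
      _ ≤ (r : ℝ) ^ (1 - 2 * β) / 2 * 1 * 1 := by gcongr; exact abs_sin_le_one _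
      _ = 1 / 2 * (r : ℝ) ^ (1 - 2 * β) := by ring
  · intro t htK ht1
    have hratio : lowerConst α ≤ |φ t| / r := by
      refine (le_div_iff₀ hr₀).mpr (le_trans ?_ (le_abs_self _))
      simpa [hφ', mul_comm] using
        card_mul_lowerConst_le_sum_resonantMode (Icc 1 r) hα₀ hK (fun i _ => hk i) htK ht1
    refine ⟨![0, 0, π / 2], ?_⟩
    rw [hnorm, show (![0, 0, π / 2] : Fin 3 → ℝ) 2 = π / 2 from rfl, sin_pi_div_two, abs_one,
      mul_one]
    calc lowerConst α / 2 * (r : ℝ) ^ (1 - 2 * β)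
        = (r : ℝ) ^ (1 - 2 * β) / 2 * lowerConst α := by ring
      _ ≤ (r : ℝ) ^ (1 - 2 * β) / 2 * (|φ t| / r) := by gcongr
end

section
/- With the wave-vector setup in the context, define for t > 0 and x ∈ ℝ³: u₁₁(t,x) = (r^{−2β}/2) Σ_{1≤i≠j≤r} |k_i|^α |k_j|^α ( ∫_0^t e^{−(|k_i|^{2α}+|k_j'|^{2α})τ} e^{−|k_j'−k_i|^{2α}(t−τ)} dτ ) sin((k_j'−k_i)·x) v'. Then there exists a constant C depending only on α (independent of r, K, t, β) such that sup_{x∈ℝ³} |u₁₁(t,x)| ≤ C r^{−2β} for all t > 0. -/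
/-!
For `i < j` we have `|k_j' - k_i| ≥ |k_j| / 2`, so both decay rates in the Duhamel integral are at
least `μ_j = (|k_j|² / 4) ^ α`; the integral is then at most `t e^{-μ_j t}`, and since
`|k_i|^α |k_j|^α ≤ 4^α 2^{-(j-i)} μ_j`, the `(i, j)` term is at most `4^α 2^{-(j-i)} g(t μ_j)` with
`g(s) = s e^{-s}` (symmetrically for `i > j`). Summing the geometric weights over `i` leaves
`∑_j g(t μ_j)`. As `t μ_{j+1} ≥ 2 t μ_j`, the estimate `g(s) ≤ 2 (e^{-s/2} - e^{-s})` makes this sum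
telescope to at most `2`, whatever `t`, `K` and `r` are.
-/

open Finset Real

lemma sum_range_inv_two_pow_sub_le_one (j : ℕ) : ∑ i ∈ range j, (2⁻¹ : ℝ) ^ (j - i) ≤ 1 := by
  rw [← sum_range_reflect]
  calc ∑ i ∈ range j, (2⁻¹ : ℝ) ^ (j - (j - 1 - i))
      = ∑ i ∈ range j, (2⁻¹ : ℝ) ^ (i + 1) :=
        sum_congr rfl fun i hi => by rw [mem_range] at hi; congr 1; omega
    _ = 2⁻¹ * ∑ i ∈ range j, (1 / 2 : ℝ) ^ i := by
        rw [mul_sum]; exact sum_congr rfl fun i _ => by rw [pow_succ']; norm_num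
    _ ≤ 2⁻¹ * 2 := by gcongr; exact sum_geometric_two_le j
    _ = 1 := by norm_num

lemma sum_ite_lt_inv_two_pow_sub_le_one (s : Finset ℕ) (j : ℕ) :
    ∑ i ∈ s, (if i < j then (2⁻¹ : ℝ) ^ (j - i) else 0) ≤ 1 := by
  rw [← sum_filter]
  refine le_trans (sum_le_sum_of_subset_of_nonneg ?_ fun _ _ _ => by positivity)
    (sum_range_inv_two_pow_sub_le_one j)
  intro i hi
  simpa using (mem_filter.mp hi).2

lemma mul_exp_neg_le (s : ℝ) : s * exp (-s) ≤ 2 * (exp (-(s / 2)) - exp (-s)) := by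
  have hsplit : exp (-(s / 2)) = exp (s / 2) * exp (-s) := by rw [← exp_add]; ring_nf
  rw [hsplit]
  nlinarith [add_one_le_exp (s / 2), exp_pos (-s)]

lemma sum_Icc_mul_exp_neg_le {s : ℕ → ℝ} (hs : ∀ n, 2 * s n ≤ s (n + 1)) (n : ℕ) :
    ∑ q ∈ Icc 1 n, s q * exp (-s q) ≤ 2 * exp (-s 0) := by
  suffices h : ∑ q ∈ Icc 1 n, s q * exp (-s q) ≤ 2 * (exp (-s 0) - exp (-s n)) by
    linarith [exp_pos (-s n)]
  induction n with
  | zero => simp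
  | succ n ih =>
    rw [sum_Icc_succ_top (by omega)]
    have hstep : exp (-(s (n + 1) / 2)) ≤ exp (-s n) := exp_le_exp.mpr (by linarith [hs n])
    linarith [mul_exp_neg_le (s (n + 1))]

lemma integral_exp_mul_exp_le {A B m t : ℝ} (ht : 0 ≤ t) (hA : m ≤ A) (hB : m ≤ B) :
    ∫ τ in (0:ℝ)..t, exp (-A * τ) * exp (-B * (t - τ)) ≤ t * exp (-(m * t)) := by
  have hbound : ∀ τ ∈ Set.uIoc 0 t, ‖exp (-A * τ) * exp (-B * (t - τ))‖ ≤ exp (-(m * t)) := by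
    intro τ hτ
    rw [Set.uIoc_of_le ht] at hτ
    rw [norm_of_nonneg (by positivity), ← exp_add, exp_le_exp]
    nlinarith [mul_le_mul_of_nonneg_right hA hτ.1.le,
      mul_le_mul_of_nonneg_right hB (sub_nonneg.mpr hτ.2)]
  have h := intervalIntegral.norm_integral_le_of_norm_le_const hbound
  rw [sub_zero, abs_of_nonneg ht, mul_comm] at h
  exact (le_abs_self _).trans h

noncomputable def geomWeight (f : ℕ → ℝ) (i j : ℕ) : ℝ :=
  if i < j then 2⁻¹ ^ (j - i) * f j else 0

lemma geomWeight_nonneg {f : ℕ → ℝ} (hf : ∀ j, 0 ≤ f j) (i j : ℕ) : 0 ≤ geomWeight f i j := by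
  unfold geomWeight
  split_ifs
  · exact mul_nonneg (by positivity) (hf j)
  · rfl

lemma sum_sum_geomWeight_add_le {f : ℕ → ℝ} (hf : ∀ j, 0 ≤ f j) (s : Finset ℕ) :
    ∑ i ∈ s, ∑ j ∈ s, (geomWeight f i j + geomWeight f j i) ≤ 2 * ∑ j ∈ s, f j := by
  have hcol : ∀ j, ∑ i ∈ s, geomWeight f i j ≤ f j := fun j => by
    calc ∑ i ∈ s, geomWeight f i j
        = (∑ i ∈ s, if i < j then (2⁻¹ : ℝ) ^ (j - i) else 0) * f j := by
          rw [sum_mul]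
          exact sum_congr rfl fun i _ => by unfold geomWeight; split_ifs <;> simp
      _ ≤ 1 * f j := by gcongr; exacts [hf j, sum_ite_lt_inv_two_pow_sub_le_one s j]
      _ = f j := one_mul _
  have hcols := sum_le_sum fun j (_ : j ∈ s) => hcol j
  have hrows := hcols
  rw [sum_comm] at hrows
  simp only [sum_add_distrib]
  linarith

lemma rpow_two_mul_eq_sq_rpow {X : ℝ} (hX : 0 ≤ X) (α : ℝ) : X ^ (2 * α) = (X ^ 2) ^ α := by
  rw [rpow_mul hX]
  norm_num

lemma sqrt_rpow_two_mul {z : ℝ} (hz : 0 ≤ z) (α : ℝ) : √z ^ (2 * α) = z ^ α := by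
  rw [rpow_two_mul_eq_sq_rpow (sqrt_nonneg z), sq_sqrt hz]

lemma rpow_mul_rpow_mul_integral_le {α t x y A B : ℝ} (hα : 1 ≤ α) (ht : 0 ≤ t) (hx : 0 ≤ x)
    (hy : 0 < y) (hxy : x ≤ y) (hA : (y ^ 2 / 4) ^ α ≤ A) (hB : (y ^ 2 / 4) ^ α ≤ B) :
    x ^ α * y ^ α * ∫ τ in (0:ℝ)..t, exp (-A * τ) * exp (-B * (t - τ))
      ≤ 4 ^ α * (x / y) * (t * (y ^ 2 / 4) ^ α * exp (-(t * (y ^ 2 / 4) ^ α))) := by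
  set μ := (y ^ 2 / 4) ^ α
  have hratio : 0 ≤ x / y := div_nonneg hx hy.le
  have hprefactor : x ^ α * y ^ α = (x / y) ^ α * 4 ^ α * μ := by
    rw [← mul_rpow hx hy.le, ← mul_rpow hratio (by norm_num), ← mul_rpow (by positivity)
      (by positivity)]
    congr 1
    field_simp
  have hI := integral_exp_mul_exp_le (m := μ) ht hA hB
  have hI0 : 0 ≤ ∫ τ in (0:ℝ)..t, exp (-A * τ) * exp (-B * (t - τ)) :=
    intervalIntegral.integral_nonneg ht fun τ _ => by positivity
  have hpow : (x / y) ^ α ≤ x / y :=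
    rpow_le_self_of_le_one hratio ((div_le_one hy).mpr hxy) hα
  calc x ^ α * y ^ α * ∫ τ in (0:ℝ)..t, exp (-A * τ) * exp (-B * (t - τ))
      ≤ (x / y) * 4 ^ α * μ * (t * exp (-(μ * t))) := by
        rw [hprefactor]; gcongr
    _ = 4 ^ α * (x / y) * (t * μ * exp (-(t * μ))) := by ring_nf

/-- The coefficient of the mode `sin ((k_j' - k_i) · x)` in `u₁₁`, for `|k_i| = a`, `|k_j| = b`. -/
noncomputable def duhamelCoeff (α t a b : ℝ) : ℝ :=
  a ^ α * b ^ α * ∫ τ in (0:ℝ)..t,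
    exp (-(a ^ (2 * α) + (b ^ 2 + 1) ^ α) * τ) * exp (-(√((b - a) ^ 2 + 1)) ^ (2 * α) * (t - τ))

section duhamelCoeff

variable {α t a b : ℝ}

lemma duhamelCoeff_le_of_two_mul_le (hα : 1 ≤ α) (ht : 0 ≤ t) (ha : 0 ≤ a) (hb : 0 < b)
    (hab : 2 * a ≤ b) :
    duhamelCoeff α t a b
      ≤ 4 ^ α * (a / b) * (t * (b ^ 2 / 4) ^ α * exp (-(t * (b ^ 2 / 4) ^ α))) := by
  have hα0 : 0 ≤ α := by linarith
  refine rpow_mul_rpow_mul_integral_le hα ht ha hb (by linarith) ?_ ?_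
  · have : (b ^ 2 / 4) ^ α ≤ (b ^ 2 + 1) ^ α := by gcongr; nlinarith
    linarith [rpow_nonneg ha (2 * α)]
  · rw [sqrt_rpow_two_mul (by positivity)]
    gcongr
    nlinarith

lemma duhamelCoeff_le_of_two_mul_le' (hα : 1 ≤ α) (ht : 0 ≤ t) (hb : 0 ≤ b) (ha : 0 < a)
    (hba : 2 * b ≤ a) :
    duhamelCoeff α t a b
      ≤ 4 ^ α * (b / a) * (t * (a ^ 2 / 4) ^ α * exp (-(t * (a ^ 2 / 4) ^ α))) := by
  have hα0 : 0 ≤ α := by linarith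
  rw [duhamelCoeff, mul_comm (a ^ α)]
  refine rpow_mul_rpow_mul_integral_le hα ht hb ha (by linarith) ?_ ?_
  · have : (a ^ 2 / 4) ^ α ≤ a ^ (2 * α) := by
      rw [rpow_two_mul_eq_sq_rpow ha.le]; gcongr; nlinarith
    linarith [rpow_nonneg (by positivity : (0:ℝ) ≤ b ^ 2 + 1) α]
  · rw [sqrt_rpow_two_mul (by positivity)]
    gcongr
    nlinarith

lemma duhamelCoeff_nonneg (ht : 0 ≤ t) (ha : 0 ≤ a) (hb : 0 ≤ b) :
    0 ≤ duhamelCoeff α t a b :=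
  mul_nonneg (by positivity) (intervalIntegral.integral_nonneg ht fun τ _ => by positivity)

end duhamelCoeff

/-- `t (|k_n|² / 4) ^ α`, with `|k_n| = 2 ^ (n - 1) K` written without truncated subtraction. -/
noncomputable def decayExponent (α t K : ℝ) (n : ℕ) : ℝ := t * (4 ^ n * K ^ 2 / 16) ^ α

lemma two_mul_decayExponent_le {α t : ℝ} (hα : 1 / 2 ≤ α) (ht : 0 ≤ t) (K : ℝ) (n : ℕ) :
    2 * decayExponent α t K n ≤ decayExponent α t K (n + 1) := by
  have h4 : (2:ℝ) ≤ 4 ^ α := by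
    calc (2:ℝ) = 4 ^ (1 / 2 : ℝ) := by
          rw [show (4:ℝ) = 2 ^ (2:ℝ) by norm_num, ← rpow_mul (by norm_num)]; norm_num
      _ ≤ 4 ^ α := rpow_le_rpow_of_exponent_le (by norm_num) hα
  have hX : 0 ≤ (4 ^ n * K ^ 2 / 16 : ℝ) ^ α := by positivity
  unfold decayExponent
  rw [pow_succ (4:ℝ) n, show (4:ℝ) ^ n * 4 * K ^ 2 / 16 = 4 * (4 ^ n * K ^ 2 / 16) by ring,
    mul_rpow (by norm_num) (by positivity)]
  nlinarith [mul_le_mul_of_nonneg_right h4 (mul_nonneg ht hX)]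

lemma two_pow_sub_one_mul_div {i j : ℕ} (hi : 1 ≤ i) (hij : i ≤ j) {K : ℝ} (hK : K ≠ 0) :
    2 ^ (i - 1) * K / (2 ^ (j - 1) * K) = (2⁻¹ : ℝ) ^ (j - i) := by
  rw [show j - 1 = (i - 1) + (j - i) by omega, pow_add, inv_pow]
  field_simp

lemma sq_two_pow_sub_one_mul_div_four {j : ℕ} (hj : 1 ≤ j) (K : ℝ) :
    (2 ^ (j - 1) * K) ^ 2 / 4 = (4 ^ j * K ^ 2 / 16 : ℝ) := by
  obtain ⟨n, rfl⟩ := Nat.exists_eq_add_of_le' hj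
  rw [Nat.add_sub_cancel, pow_succ, show (4:ℝ) = 2 ^ 2 by norm_num, ← pow_mul]
  ring

lemma duhamelCoeff_le_geomWeight {α t K : ℝ} (hα : 1 ≤ α) (ht : 0 ≤ t) (hK : 0 < K) {i j : ℕ}
    (hi : 1 ≤ i) (hj : 1 ≤ j) (hij : i ≠ j) :
    duhamelCoeff α t (2 ^ (i - 1) * K) (2 ^ (j - 1) * K)
      ≤ 4 ^ α * (geomWeight (fun n => decayExponent α t K n * exp (-decayExponent α t K n)) i j
        + geomWeight (fun n => decayExponent α t K n * exp (-decayExponent α t K n)) j i) := by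
  have hgw : ∀ {p q : ℕ}, 1 ≤ p → p < q → 2 * (2 ^ (p - 1) * K) ≤ 2 ^ (q - 1) * K := by
    intro p q hp hpq
    rw [← mul_assoc, ← pow_succ']
    gcongr
    · norm_num
    · omega
  rcases lt_or_gt_of_ne hij with hlt | hgt
  · have h := duhamelCoeff_le_of_two_mul_le hα ht (by positivity) (by positivity) (hgw hi hlt)
    rw [two_pow_sub_one_mul_div hi hlt.le hK.ne', sq_two_pow_sub_one_mul_div_four hj] at h
    simpa [geomWeight, hlt, hlt.not_gt, decayExponent, mul_assoc] using h
  · have h := duhamelCoeff_le_of_two_mul_le' hα ht (by positivity) (by positivity) (hgw hj hgt)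
    rw [two_pow_sub_one_mul_div hj hgt.le hK.ne', sq_two_pow_sub_one_mul_div_four hi] at h
    simpa [geomWeight, hgt, hgt.not_gt, decayExponent, mul_assoc] using h

lemma abs_sum_duhamelCoeff_mul_sin_le {α t K : ℝ} (hα : 1 ≤ α) (ht : 0 ≤ t) (hK : 0 < K)
    {a : ℕ → ℝ} (ha : ∀ i, a i = 2 ^ (i - 1) * K) (θ : ℕ → ℕ → ℝ) (r : ℕ) :
    |∑ i ∈ Icc 1 r, ∑ j ∈ Icc 1 r,
        if i ≠ j then duhamelCoeff α t (a i) (a j) * sin (θ i j) else 0| ≤ 4 * 4 ^ α := by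
  set f : ℕ → ℝ := fun n => decayExponent α t K n * exp (-decayExponent α t K n)
  have hσ : ∀ n, 0 ≤ decayExponent α t K n := fun n => by unfold decayExponent; positivity
  have hf : ∀ n, 0 ≤ f n := fun n => mul_nonneg (hσ n) (exp_pos _).le
  have hterm : ∀ i ∈ Icc 1 r, ∀ j ∈ Icc 1 r,
      |if i ≠ j then duhamelCoeff α t (a i) (a j) * sin (θ i j) else 0|
        ≤ 4 ^ α * (geomWeight f i j + geomWeight f j i) := by
    intro i hi j hj
    rw [mem_Icc] at hi hj
    split_ifs with hij
    · rw [ha, ha]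
      have hc0 := duhamelCoeff_nonneg (α := α) ht (a := 2 ^ (i - 1) * K) (b := 2 ^ (j - 1) * K)
        (by positivity) (by positivity)
      rw [abs_mul, abs_of_nonneg hc0]
      exact (mul_le_of_le_one_right hc0 (abs_sin_le_one _)).trans
        (duhamelCoeff_le_geomWeight hα ht hK hi.1 hj.1 hij)
    · simpa using mul_nonneg (by positivity)
        (add_nonneg (geomWeight_nonneg hf i j) (geomWeight_nonneg hf j i))
  have hdecay : ∑ j ∈ Icc 1 r, f j ≤ 2 :=
    (sum_Icc_mul_exp_neg_le (two_mul_decayExponent_le (by linarith) ht K) r).trans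
      (by linarith [exp_le_one_iff.mpr (neg_nonpos.mpr (hσ 0))])
  calc _ ≤ ∑ i ∈ Icc 1 r, ∑ j ∈ Icc 1 r,
          |if i ≠ j then duhamelCoeff α t (a i) (a j) * sin (θ i j) else 0| :=
        (abs_sum_le_sum_abs _ _).trans (sum_le_sum fun i _ => abs_sum_le_sum_abs _ _)
    _ ≤ ∑ i ∈ Icc 1 r, ∑ j ∈ Icc 1 r, 4 ^ α * (geomWeight f i j + geomWeight f j i) :=
        sum_le_sum fun i hi => sum_le_sum fun j hj => hterm i hi j hj
    _ ≤ 4 ^ α * (2 * 2) := by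
        simp only [← mul_sum]
        gcongr
        exact (sum_sum_geomWeight_add_le hf _).trans (by linarith)
    _ = 4 * 4 ^ α := by ring

/-- The difference-frequency part `u₁₁` of the second Picard iterate satisfies the uniform
bound `sup_x |u₁₁(t,x)| ≤ C r^{-2β}` for all `t > 0`, with `C` depending only on `α`. -/
theorem stmt_9 (α : ℝ) (hα : 1 ≤ α) :
    ∃ C : ℝ, 0 < C ∧
      ∀ r : ℕ, 1 ≤ r → ∀ K β : ℝ, 1 ≤ K → 0 < β →
      ∀ kmag : ℕ → ℝ, (∀ i, kmag i = (2:ℝ) ^ (i - 1) * K) →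
      ∀ k k' : ℕ → Fin 3 → ℝ,
        (∀ i, k i = ![kmag i, 0, 0]) → (∀ i, k' i = ![kmag i, 0, 1]) →
      ∀ u₁₁ : ℝ → (Fin 3 → ℝ) → Fin 3 → ℝ,
        (∀ t x, u₁₁ t x = ((r:ℝ) ^ (-(2 * β)) / 2) •
          ∑ i ∈ Finset.Icc 1 r, ∑ j ∈ Finset.Icc 1 r,
            if i ≠ j then
              ((kmag i ^ α * kmag j ^ α *
                  ∫ τ in (0:ℝ)..t,
                    Real.exp (-(kmag i ^ (2 * α) + (kmag j ^ 2 + 1) ^ α) * τ) *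
                      Real.exp (-(Real.sqrt (∑ m, (k' j m - k i m) ^ 2)) ^ (2 * α) *
                        (t - τ))) *
                Real.sin (∑ m, (k' j m - k i m) * x m)) • (![0, 1, 0] : Fin 3 → ℝ)
            else 0) →
        ∀ t : ℝ, 0 < t → ∀ x : Fin 3 → ℝ,
          Real.sqrt (∑ p, u₁₁ t x p ^ 2) ≤ C * (r:ℝ) ^ (-(2 * β)) := by
  refine ⟨2 * 4 ^ α, by positivity, ?_⟩
  intro r _ K β hK _ kmag hkmag k k' hk hk' u₁₁ hu t ht x
  have hdist : ∀ i j, ∑ m, (k' j m - k i m) ^ 2 = (kmag j - kmag i) ^ 2 + 1 := fun i j => by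
    simp [hk, hk', Fin.sum_univ_three]
  have hu' : u₁₁ t x = ((r:ℝ) ^ (-(2 * β)) / 2 * ∑ i ∈ Icc 1 r, ∑ j ∈ Icc 1 r,
      if i ≠ j then duhamelCoeff α t (kmag i) (kmag j) * sin (∑ m, (k' j m - k i m) * x m)
      else 0) • ![0, 1, 0] := by
    rw [hu, mul_smul, sum_smul]
    simp only [hdist, sum_smul, ite_smul, zero_smul]
    rfl
  have hS := abs_sum_duhamelCoeff_mul_sin_le hα ht.le (by linarith) hkmag
    (fun i j => ∑ m, (k' j m - k i m) * x m) r
  have hr : 0 ≤ (r:ℝ) ^ (-(2 * β)) / 2 := by positivity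
  have hnorm : ∀ c : ℝ, √(∑ p, (c • ![0, 1, 0] : Fin 3 → ℝ) p ^ 2) = |c| := fun c => by
    simp [Fin.sum_univ_three, sqrt_sq_eq_abs]
  rw [hu', hnorm, abs_mul, abs_of_nonneg hr]
  calc _ ≤ (r:ℝ) ^ (-(2 * β)) / 2 * (4 * 4 ^ α) := by gcongr
    _ = 2 * 4 ^ α * (r:ℝ) ^ (-(2 * β)) := by ring
end

section
/- Let α > 0. There exists a constant C = C(α) > 0 such that for every real K > 0, every integer r ≥ 2, and every t > 0: Σ_{i=2}^r Σ_{j=1}^{i−1} (2^{i−1}K)^α (2^{j−1}K)^α · t · e^{−(2^{i−1}K)^{2α} t} ≤ C. -/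
/-!
Write `p = 2 ^ α` and `a m = (2 ^ m * K) ^ α`, so that `a (m + 1) = p * a m`. The inner sum is
then at most `a (i - 1) / (p - 1)`, and the double sum is at most `(p - 1)⁻¹ ∑ x k * exp (-x k)`
for the lacunary sequence `x k = a k ^ 2 * t` of ratio `p ^ 2`. As `x * exp (-x) ≤ 2 min x x⁻¹`,
it suffices to bound `∑ min (x k) (x k)⁻¹` uniformly over lacunary sequences of a fixed ratio
`q > 1`: this sum telescopes against the increasing potential `Φ x = min x 1 - min 1 x⁻¹`, which
takes values in `[-1, 1]` and satisfies `min x x⁻¹ ≤ q / (q - 1) * (Φ (q * x) - Φ x)`.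
-/

open Finset Real

theorem sum_Icc_one_sub_one {M : Type*} [AddCommMonoid M] (f : ℕ → M) (n : ℕ) :
    ∑ j ∈ Icc 1 n, f (j - 1) = ∑ k ∈ range n, f k := by
  induction n with
  | zero => simp
  | succ n ih => rw [sum_Icc_succ_top (by omega), ih, sum_range_succ, Nat.add_sub_cancel]

noncomputable def lacunaryPotential (x : ℝ) : ℝ := min x 1 - min 1 x⁻¹

theorem lacunaryPotential_le_of_le {x y : ℝ} (hx : 0 < x) (hxy : x ≤ y) :
    lacunaryPotential x ≤ lacunaryPotential y := by
  unfold lacunaryPotential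
  have := min_le_min_right 1 hxy
  have := min_le_min_left 1 (inv_anti₀ hx hxy)
  linarith

theorem lacunaryPotential_sub_le_two {x y : ℝ} (hx : 0 ≤ x) (hy : 0 ≤ y) :
    lacunaryPotential y - lacunaryPotential x ≤ 2 := by
  unfold lacunaryPotential
  have := min_le_right y 1
  have := min_le_left 1 x⁻¹
  have := le_min hx zero_le_one
  have := le_min zero_le_one (inv_nonneg.2 hy)
  linarith

theorem min_self_inv_le_lacunaryPotential_sub {q x : ℝ} (hq : 1 < q) (hx : 0 < x) :
    min x x⁻¹ ≤ q / (q - 1) * (lacunaryPotential (q * x) - lacunaryPotential x) := by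
  have hq' : 0 < q - 1 := by linarith
  rw [div_mul_eq_mul_div, le_div_iff₀ hq']
  unfold lacunaryPotential
  have hq0 : 0 < q := by linarith
  rcases le_total x q⁻¹ with hsmall | hmid
  · have hqx : q * x ≤ 1 := by
      simpa [mul_inv_cancel₀ hq0.ne'] using mul_le_mul_of_nonneg_left hsmall hq0.le
    have hx1 : x ≤ 1 := by nlinarith
    rw [min_eq_left hqx, min_eq_left hx1, min_eq_left (one_le_inv₀ (by positivity) |>.2 hqx),
      min_eq_left (one_le_inv₀ hx |>.2 hx1)]
    nlinarith [mul_le_mul_of_nonneg_left (min_le_left x x⁻¹) hq'.le, mul_pos hx hq']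
  rcases le_total x 1 with hx1 | hlarge
  · have hqx : 1 ≤ q * x := by rw [mul_comm]; exact (inv_le_iff_one_le_mul₀ hq0).1 hmid
    rw [min_eq_right hqx, min_eq_left hx1, min_eq_right (inv_le_one_of_one_le₀ hqx),
      min_eq_left (one_le_inv₀ hx |>.2 hx1),
      min_eq_left (le_trans hx1 (one_le_inv₀ hx |>.2 hx1))]
    rw [mul_inv, ← sub_nonneg]
    have key : 0 ≤ (1 - x) * ((2 * q - 1) * x - 1) := mul_nonneg (by linarith) (by nlinarith)
    have : q * (1 - q⁻¹ * x⁻¹ - (x - 1)) - x * (q - 1) = (1 - x) * ((2 * q - 1) * x - 1) / x := by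
      field_simp; ring
    rw [this]
    exact div_nonneg key hx.le
  · have hqx : 1 ≤ q * x := by nlinarith
    rw [min_eq_right hqx, min_eq_right hlarge, min_eq_right (inv_le_one_of_one_le₀ hqx),
      min_eq_right (inv_le_one_of_one_le₀ hlarge),
      min_eq_right (le_trans (inv_le_one_of_one_le₀ hlarge) hlarge)]
    rw [mul_inv]
    field_simp
    linarith

theorem mul_exp_neg_le_two_mul_min_self_inv {x : ℝ} (hx : 0 < x) :
    x * exp (-x) ≤ 2 * min x x⁻¹ := by
  rw [mul_min_of_nonneg _ _ zero_le_two]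
  have hexp : exp (-x) ≤ 1 := exp_le_one_iff.2 (by linarith)
  have hsq : x ^ 2 / 2 ≤ exp x := by simpa using pow_div_factorial_le_exp x hx.le 2
  refine le_min (by nlinarith) ?_
  rw [exp_neg, ← div_eq_mul_inv, div_le_iff₀ (exp_pos x)]
  field_simp
  linarith

section Lacunary

variable {q : ℝ} {x : ℕ → ℝ}

theorem sum_range_le_div_of_lacunary (hq : 1 < q) (hx₀ : 0 ≤ x 0)
    (hx : ∀ k, q * x k ≤ x (k + 1)) (n : ℕ) :
    ∑ k ∈ range n, x k ≤ x n / (q - 1) := by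
  have hq' : 0 < q - 1 := by linarith
  induction n with
  | zero => simpa using div_nonneg hx₀ hq'.le
  | succ n ih =>
    rw [sum_range_succ, le_div_iff₀ hq']
    have := (le_div_iff₀ hq').1 ih
    nlinarith [hx n]

theorem sum_range_min_self_inv_le_of_lacunary (hq : 1 < q) (hpos : ∀ k, 0 < x k)
    (hx : ∀ k, q * x k ≤ x (k + 1)) (n : ℕ) :
    ∑ k ∈ range n, min (x k) (x k)⁻¹ ≤ 2 * q / (q - 1) := by
  have hc : 0 ≤ q / (q - 1) := div_nonneg (by linarith) (by linarith)
  calc ∑ k ∈ range n, min (x k) (x k)⁻¹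
      ≤ ∑ k ∈ range n, q / (q - 1) *
          (lacunaryPotential (x (k + 1)) - lacunaryPotential (x k)) := by
        gcongr with k
        refine (min_self_inv_le_lacunaryPotential_sub hq (hpos k)).trans ?_
        gcongr
        exact lacunaryPotential_le_of_le (mul_pos (by linarith) (hpos k)) (hx k)
    _ = q / (q - 1) * (lacunaryPotential (x n) - lacunaryPotential (x 0)) := by
        rw [← mul_sum, sum_range_sub (fun k ↦ lacunaryPotential (x k))]
    _ ≤ q / (q - 1) * 2 := by
        gcongr; exact lacunaryPotential_sub_le_two (hpos 0).le (hpos n).le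
    _ = 2 * q / (q - 1) := by ring

theorem sum_range_mul_exp_neg_le_of_lacunary (hq : 1 < q) (hpos : ∀ k, 0 < x k)
    (hx : ∀ k, q * x k ≤ x (k + 1)) (n : ℕ) :
    ∑ k ∈ range n, x k * exp (-x k) ≤ 4 * q / (q - 1) :=
  calc ∑ k ∈ range n, x k * exp (-x k)
      ≤ ∑ k ∈ range n, 2 * min (x k) (x k)⁻¹ :=
        sum_le_sum fun k _ ↦ mul_exp_neg_le_two_mul_min_self_inv (hpos k)
    _ ≤ 2 * (2 * q / (q - 1)) := by
        rw [← mul_sum]; gcongr; exact sum_range_min_self_inv_le_of_lacunary hq hpos hx n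
    _ = 4 * q / (q - 1) := by ring

end Lacunary

/-- Key scalar estimate: for `α > 0` there is `C = C(α)` such that for every `K > 0`, `r ≥ 2`
and `t > 0`,
`∑_{i=2}^r ∑_{j=1}^{i-1} (2^(i-1)K)^α (2^(j-1)K)^α · t · e^{-(2^(i-1)K)^{2α} t} ≤ C`. -/
theorem stmt_11 (α : ℝ) (hα : 0 < α) :
    ∃ C : ℝ, 0 < C ∧
      ∀ K : ℝ, 0 < K → ∀ r : ℕ, 2 ≤ r → ∀ t : ℝ, 0 < t →
        (∑ i ∈ Finset.Icc 2 r, ∑ j ∈ Finset.Icc 1 (i - 1),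
            ((2:ℝ) ^ (i - 1) * K) ^ α * ((2:ℝ) ^ (j - 1) * K) ^ α * t *
              Real.exp (-(((2:ℝ) ^ (i - 1) * K) ^ (2 * α)) * t)) ≤ C := by
  set p : ℝ := (2:ℝ) ^ α
  have hp : 1 < p := one_lt_rpow one_lt_two hα
  have hp2 : 1 < p ^ 2 := one_lt_pow₀ hp two_ne_zero
  refine ⟨4 * p ^ 2 / (p ^ 2 - 1) / (p - 1),
    div_pos (div_pos (by positivity) (by linarith)) (by linarith), ?_⟩
  intro K hK r _ t ht
  set a : ℕ → ℝ := fun m ↦ ((2:ℝ) ^ m * K) ^ α with ha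
  have ha_pos : ∀ m, 0 < a m := fun m ↦ rpow_pos_of_pos (by positivity) α
  have ha_succ : ∀ m, a (m + 1) = p * a m := fun m ↦ by
    simp only [ha]; rw [pow_succ', mul_assoc, mul_rpow zero_le_two (by positivity)]
  have ha_sq : ∀ m, ((2:ℝ) ^ m * K) ^ (2 * α) = a m ^ 2 := fun m ↦ by
    rw [mul_comm 2 α, ← rpow_mul_natCast (by positivity)]; norm_num
  set x : ℕ → ℝ := fun m ↦ a m ^ 2 * t with hx
  have hx_pos : ∀ m, 0 < x m := fun m ↦ by have := ha_pos m; positivity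
  have hx_succ : ∀ m, p ^ 2 * x m ≤ x (m + 1) := fun m ↦ by
    simp only [hx, ha_succ]; exact le_of_eq (by ring)
  calc _ = ∑ i ∈ Icc 2 r, a (i - 1) * t * exp (-x (i - 1)) * ∑ j ∈ Icc 1 (i - 1), a (j - 1) := by
        refine sum_congr rfl fun i _ ↦ ?_
        rw [mul_sum, ha_sq, hx]
        exact sum_congr rfl fun j _ ↦ by simp only [ha, neg_mul]; ring
    _ ≤ ∑ i ∈ Icc 2 r, x (i - 1) * exp (-x (i - 1)) / (p - 1) := by
        gcongr with i
        rw [sum_Icc_one_sub_one]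
        calc _ ≤ a (i - 1) * t * exp (-x (i - 1)) * (a (i - 1) / (p - 1)) := by
              have := ha_pos (i - 1)
              gcongr
              exact sum_range_le_div_of_lacunary hp (ha_pos 0).le (fun k ↦ (ha_succ k).ge) _
          _ = _ := by rw [hx]; ring
    _ ≤ ∑ i ∈ Icc 1 r, x (i - 1) * exp (-x (i - 1)) / (p - 1) :=
        sum_le_sum_of_subset_of_nonneg (Icc_subset_Icc_left one_le_two)
          fun i _ _ ↦ div_nonneg (mul_nonneg (hx_pos _).le (exp_pos _).le) (by linarith)
    _ = (∑ k ∈ range r, x k * exp (-x k)) / (p - 1) := by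
        rw [← sum_div, sum_Icc_one_sub_one (fun k ↦ x k * exp (-x k))]
    _ ≤ _ := div_le_div_of_nonneg_right
        (sum_range_mul_exp_neg_le_of_lacunary hp2 hx_pos hx_succ r) (by linarith)
end
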